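/- Fix 1 ≤ ℓ ≤ N and a real k > 0. Then there exist R > 0 and real sequences (p_n)_{n≥0} with p_0 = k^{−ρ_ℓ} and (b_n)_{n≥0} with b_0 = ρ_ℓ such that: (a) ∑_{n=0}^∞ p_n q^{−n} converges absolutely for every q ∈ ℂ with |q| > R and k^{−ζ_ℓ(q)} = ∑_{n=0}^∞ p_n q^{−n} for every real q > R; (b) ζ_ℓ(q) = ∑_{n=0}^∞ b_n q^{−n} for real q > R, the function q ↦ ζ_ℓ(q) is differentiable on (R, ∞), and ζ_ℓ′(q) = ∑_{n=2}^∞ (1−n)·b_{n−1}·q^{−n}, the latter series converging absolutely for |q| > R. Analogously, for 1 ≤ ℓ ≤ N̂ there is a series ∑_{n=0}^∞ p̂_n q^{−n} with p̂_0 = k^{ρ̂_ℓ}, converging absolutely for |q| > R, with k^{ζ̂_ℓ(q)} = ∑_{n=0}^∞ p̂_n q^{−n} for real q > R, and −ζ̂_ℓ′(q) = ∑_{n=2}^∞ (1−n)·b̂_{n−1}·q^{−n}, where −ζ̂_ℓ(q) = ∑_{n=0}^∞ b̂_n q^{−n} with b̂_0 = −ρ̂_ℓ for real q > R. -/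

import Mathlib

/-- The Laplace exponent of a hyperexponential Lévy process, extended to a rational
function on `ℂ`. -/
noncomputable def psi (σ A : ℝ) (N Nh : ℕ) (aa ρ ah ρh : ℕ → ℝ) (z : ℂ) : ℂ :=
  (σ : ℂ) ^ 2 * z ^ 2 / 2 + (A : ℂ) * z
    + z * ∑ ℓ ∈ Finset.Icc 1 N, (aa ℓ : ℂ) / ((ρ ℓ : ℂ) - z)
    - z * ∑ ℓ ∈ Finset.Icc 1 Nh, (ah ℓ : ℂ) / ((ρh ℓ : ℂ) + z)

open Filter Finset

noncomputable def psiR (σ A : ℝ) (N Nh : ℕ) (aa ρ ah ρh : ℕ → ℝ) (x : ℝ) : ℝ :=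
  σ ^ 2 * x ^ 2 / 2 + A * x + x * ∑ ℓ ∈ Finset.Icc 1 N, aa ℓ / (ρ ℓ - x)
    - x * ∑ ℓ ∈ Finset.Icc 1 Nh, ah ℓ / (ρh ℓ + x)

lemma psi_ofReal (σ A : ℝ) (N Nh : ℕ) (aa ρ ah ρh : ℕ → ℝ) (x : ℝ) :
    psi σ A N Nh aa ρ ah ρh (x : ℂ) = ((psiR σ A N Nh aa ρ ah ρh x : ℝ) : ℂ) := by
  simp only [psi, psiR]
  push_cast
  ring

lemma psiR_neg (σ A : ℝ) (N Nh : ℕ) (aa ρ ah ρh : ℕ → ℝ) (x : ℝ) :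
    psiR σ A N Nh aa ρ ah ρh (-x) = psiR σ (-A) Nh N ah ρh aa ρ x := by
  simp only [psiR, sub_neg_eq_add, ← sub_eq_add_neg]
  ring

lemma aux_expansion (c s : ℝ) (Φ ξ : ℝ → ℝ)
    (hΦ : AnalyticAt ℝ Φ c) (hΦc : Φ c ≠ 0)
    (hlt : ∀ q : ℝ, 0 < q → ξ q < c)
    (hval : ∀ q : ℝ, 0 < q → Φ (ξ q) = (c - ξ q) * q)
    (hx : ∀ ε : ℝ, 0 < ε → ∃ M : ℝ, ∀ q : ℝ, M < q → c - ε < ξ q) :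
    ∃ R > (0:ℝ), ∃ p b : ℕ → ℝ, p 0 = Real.exp (s * c) ∧ b 0 = c ∧
      (∀ q : ℂ, R < ‖q‖ → Summable fun n : ℕ => ‖(p n : ℂ) * q ^ (-(n:ℤ))‖) ∧
      (∀ q : ℝ, R < q → Real.exp (s * ξ q) = ∑' n : ℕ, p n * q ^ (-(n:ℤ))) ∧
      (∀ q : ℝ, R < q → ξ q = ∑' n : ℕ, b n * q ^ (-(n:ℤ)) ∧
        HasDerivAt ξ (∑' n : ℕ, (1 - ((n:ℝ)+2)) * b (n+1) * q ^ (-(n:ℤ)-2)) q) ∧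
      (∀ q : ℂ, R < ‖q‖ → Summable fun n : ℕ =>
        ‖(((1 - ((n:ℝ)+2)) * b (n+1) : ℝ) : ℂ) * q ^ (-(n:ℤ)-2)‖) := by
  classical
  set h : ℝ → ℝ := fun x => (c - x) / Φ x with hh
  have hA : AnalyticAt ℝ h c := (analyticAt_const.sub analyticAt_id).div hΦ hΦc
  have hu : HasDerivAt (fun x : ℝ => c - x) (-1) c := by
    simpa using (hasDerivAt_id c).const_sub c
  have hΦd : HasDerivAt Φ (deriv Φ c) c := hΦ.differentiableAt.hasDerivAt
  have hd : HasDerivAt h ((-1 * Φ c - (c - c) * deriv Φ c) / Φ c ^ 2) c := hu.div hΦd hΦc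
  set d : ℝ := (-1 * Φ c - (c - c) * deriv Φ c) / Φ c ^ 2 with hdd
  have hd0 : d ≠ 0 := by
    rw [hdd, sub_self, zero_mul, sub_zero]
    field_simp
    simpa using hΦc
  have hfd : fderiv ℝ h c = ContinuousLinearMap.smulRight (1 : ℝ →L[ℝ] ℝ) d :=
    hd.hasFDerivAt.fderiv
  set i : ℝ ≃L[ℝ] ℝ := ContinuousLinearEquiv.unitsEquivAut ℝ (Units.mk0 d hd0) with hi
  have hieq : (i : ℝ →L[ℝ] ℝ) = fderiv ℝ h c := by
    refine ContinuousLinearMap.ext fun x => ?_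
    rw [hfd]
    simp [hi, ContinuousLinearEquiv.unitsEquivAut_apply, mul_comm]
  have hstrict : HasStrictFDerivAt h (i : ℝ →L[ℝ] ℝ) c := by
    rw [hieq]; exact hA.hasStrictFDerivAt
  set F := hstrict.toOpenPartialHomeomorph h with hF
  have hFcoe : (F : ℝ → ℝ) = h := hstrict.toOpenPartialHomeomorph_coe
  have hFsrc : c ∈ F.source := hstrict.mem_toOpenPartialHomeomorph_source
  obtain ⟨pp, hpp⟩ := hA
  have hppF : HasFPowerSeriesAt (⇑F) pp c := by rw [hFcoe]; exact hpp
  have hp1 : pp 1 = (continuousMultilinearCurryFin1 ℝ ℝ ℝ).symm (i : ℝ →L[ℝ] ℝ) := by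
    have h2 := hpp.fderiv_eq
    rw [← hieq] at h2
    rw [h2]
    simp
  have hc0 : h c = 0 := by simp [hh]
  have hFc : (F : ℝ → ℝ) c = 0 := by rw [hFcoe, hc0]
  have hsymm : HasFPowerSeriesAt (F.symm) (pp.leftInv i c) (0 : ℝ) := by
    have := F.hasFPowerSeriesAt_symm hFsrc hppF hp1
    rwa [hFc] at this
  set g : ℝ → ℝ := ⇑F.symm with hg
  set qs := pp.leftInv i c with hqs
  have hg0 : g 0 = c := by
    rw [hg, ← hFc]
    exact F.left_inv hFsrc
  obtain ⟨r, hball⟩ := hsymm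
  obtain ⟨r0, hr0pos, hr0lt⟩ := ENNReal.lt_iff_exists_nnreal_btwn.mp hball.r_pos
  set rr : ℝ := (r0 : ℝ) with hrr
  have hrrpos : 0 < rr := by exact_mod_cast hr0pos
  -- the exponential series
  have hG2 : AnalyticAt ℝ (fun w => Real.exp (s * g w)) 0 :=
    analyticAt_rexp.comp (analyticAt_const.mul (hball.hasFPowerSeriesAt.analyticAt))
  obtain ⟨pq, hpq⟩ := hG2
  obtain ⟨r2, hball2⟩ := hpq
  obtain ⟨r1, hr1pos, hr1lt⟩ := ENNReal.lt_iff_exists_nnreal_btwn.mp hball2.r_pos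
  set rr1 : ℝ := (r1 : ℝ) with hrr1
  have hrr1pos : 0 < rr1 := by exact_mod_cast hr1pos
  -- hasSum facts
  have hsb : ∀ w : ℝ, |w| < rr → HasSum (fun n : ℕ => w ^ n * qs.coeff n) (g w) := by
    intro w hw
    have hmem : w ∈ EMetric.ball (0:ℝ) r := by
      show edist w (0:ℝ) < _
      rw [edist_zero_right]
      refine lt_trans ?_ hr0lt
      have hww : ‖w‖₊ < r0 := by
        rw [← NNReal.coe_lt_coe]
        simpa [Real.norm_eq_abs] using hw
      exact_mod_cast hww
    have := hball.hasSum hmem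
    rw [zero_add] at this
    refine HasSum.congr_fun this fun n => ?_
    rw [FormalMultilinearSeries.apply_eq_pow_smul_coeff, smul_eq_mul]
  have hsp : ∀ w : ℝ, |w| < rr1 → HasSum (fun n : ℕ => w ^ n * pq.coeff n)
      (Real.exp (s * g w)) := by
    intro w hw
    have hmem : w ∈ EMetric.ball (0:ℝ) r2 := by
      show edist w (0:ℝ) < _
      rw [edist_zero_right]
      refine lt_trans ?_ hr1lt
      have hww : ‖w‖₊ < r1 := by
        rw [← NNReal.coe_lt_coe]
        simpa [Real.norm_eq_abs] using hw
      exact_mod_cast hww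
    have := hball2.hasSum hmem
    rw [zero_add] at this
    refine HasSum.congr_fun this fun n => ?_
    rw [FormalMultilinearSeries.apply_eq_pow_smul_coeff, smul_eq_mul]
  -- summable norm facts
  have hsumb : Summable (fun n : ℕ => ‖qs n‖ * rr ^ n) :=
    qs.summable_norm_mul_pow (lt_of_lt_of_le hr0lt hball.r_le)
  have hsump : Summable (fun n : ℕ => ‖pq n‖ * rr1 ^ n) :=
    pq.summable_norm_mul_pow (lt_of_lt_of_le hr1lt hball2.r_le)
  have hcb : ∀ n, |qs.coeff n| = ‖qs n‖ := fun n => (qs.norm_apply_eq_norm_coef (n := n)).symm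
  have hcp : ∀ n, |pq.coeff n| = ‖pq n‖ := fun n => (pq.norm_apply_eq_norm_coef (n := n)).symm
  -- choice of R
  obtain ⟨ε, hεpos, hεsub⟩ := Metric.mem_nhds_iff.mp (F.open_source.mem_nhds hFsrc)
  obtain ⟨M, hM⟩ := hx ε hεpos
  set R : ℝ := max (max M 1) (max (2/rr) (2/rr1)) with hRdef
  have hRpos : (0:ℝ) < R :=
    lt_of_lt_of_le one_pos (le_trans (le_max_right M 1) (le_max_left _ _))
  have hqpos : ∀ q : ℝ, R < q → 0 < q := fun q hq => lt_trans hRpos hq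
  have key_half : ∀ t q : ℝ, 0 < t → 2/t < q → 0 < q → |1/q| < t/2 := by
    intro t q ht hh2 hq
    rw [abs_of_pos (by positivity), div_lt_div_iff₀ hq (by norm_num : (0:ℝ) < 2)]
    rw [div_lt_iff₀ ht] at hh2
    nlinarith
  have hhalf : ∀ q : ℝ, R < q → |1/q| < rr/2 := by
    intro q hq
    exact key_half rr q hrrpos
      (lt_of_le_of_lt (le_trans (le_max_left _ _) (le_max_right (max M 1) _)) hq) (hqpos q hq)
  have hhalf1 : ∀ q : ℝ, R < q → |1/q| < rr1/2 := by
    intro q hq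
    exact key_half rr1 q hrr1pos
      (lt_of_le_of_lt (le_trans (le_max_right _ _) (le_max_right (max M 1) _)) hq) (hqpos q hq)
  have hfull : ∀ q : ℝ, R < q → |1/q| < rr := fun q hq =>
    lt_trans (hhalf q hq) (by linarith)
  have hfull1 : ∀ q : ℝ, R < q → |1/q| < rr1 := fun q hq =>
    lt_trans (hhalf1 q hq) (by linarith)
  -- key identity
  have hkey : ∀ q : ℝ, R < q → ξ q = g (1/q) := by
    intro q hq
    have hq0 : 0 < q := hqpos q hq
    have hsrc : ξ q ∈ F.source := by
      apply hεsub
      rw [Metric.mem_ball, Real.dist_eq, abs_lt]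
      have h1 := hM q (lt_of_le_of_lt (le_trans (le_max_left M 1) (le_max_left _ _)) hq)
      have h2 := hlt q hq0
      constructor <;> linarith
    have hcx : (0:ℝ) < c - ξ q := sub_pos.mpr (hlt q hq0)
    have hhx : h (ξ q) = 1/q := by
      rw [hh]
      dsimp only
      rw [hval q hq0, ← div_div, div_self (ne_of_gt hcx)]
    rw [hg, ← hhx, ← hFcoe]
    exact (F.left_inv hsrc).symm
  -- zpow rewriting helper
  have hzp : ∀ (y : ℝ) (n : ℕ), y ^ (-(n:ℤ)) = (1/y) ^ n := by
    intro y n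
    rw [zpow_neg, zpow_natCast, one_div, inv_pow]
  have hzpC : ∀ (y : ℂ) (n : ℕ), y ^ (-(n:ℤ)) = (1/y) ^ n := by
    intro y n
    rw [zpow_neg, zpow_natCast, one_div, inv_pow]
  -- helper inequality
  have hpow2 : ∀ (x : ℝ) (kk : ℕ), 0 ≤ x → x ≤ 2^kk → x * (rr/2)^kk ≤ rr^kk := by
    intro x kk hx0 hx
    have h1 : x * (rr/2)^kk = (x/2^kk) * rr^kk := by
      rw [div_pow]; ring
    rw [h1]
    calc (x/2^kk) * rr^kk ≤ 1 * rr^kk := by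
          apply mul_le_mul_of_nonneg_right _ (by positivity)
          rw [div_le_one (by positivity)]
          exact hx
      _ = rr^kk := one_mul _
  have hn2 : ∀ n : ℕ, (n:ℝ) ≤ 2^n := by
    intro n
    exact_mod_cast (Nat.lt_two_pow_self (n := n)).le
  -- tsum expression for ξ
  have hts : ∀ q : ℝ, R < q → ξ q = ∑' n : ℕ, qs.coeff n * q ^ (-(n:ℤ)) := by
    intro q hq
    rw [hkey q hq, ← (hsb (1/q) (hfull q hq)).tsum_eq]
    exact tsum_congr fun n => by rw [hzp, mul_comm]
  -- derivative bound
  have hdbound : ∀ (n : ℕ) (y : ℝ), y ∈ Set.Ioi R →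
      ‖qs.coeff n * (((-(n:ℤ) : ℤ) : ℝ) * y ^ (-(n:ℤ)-1))‖ ≤ ‖qs n‖ * rr ^ n * rr := by
    intro n y hy
    have hy' : R < y := hy
    have hy0 : 0 < y := hqpos y hy'
    have he : y ^ (-(n:ℤ)-1) = (1/y)^(n+1) := by
      rw [← hzp y (n+1)]
      congr 1
      push_cast
      ring
    rw [he, Real.norm_eq_abs, abs_mul, abs_mul, hcb]
    have h1 : |(((-(n:ℤ) : ℤ) : ℝ))| = (n:ℝ) := by
      simp
    rw [h1, abs_pow]
    calc ‖qs n‖ * ((n:ℝ) * |1/y| ^ (n+1))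
        ≤ ‖qs n‖ * ((n:ℝ) * (rr/2) ^ (n+1)) := by
          apply mul_le_mul_of_nonneg_left _ (norm_nonneg _)
          apply mul_le_mul_of_nonneg_left _ (Nat.cast_nonneg n)
          exact pow_le_pow_left₀ (abs_nonneg _) (hhalf y hy').le (n+1)
      _ ≤ ‖qs n‖ * rr ^ (n+1) := by
          apply mul_le_mul_of_nonneg_left _ (norm_nonneg _)
          apply hpow2 _ _ (Nat.cast_nonneg n)
          calc (n:ℝ) ≤ 2^n := hn2 n
            _ ≤ 2^(n+1) := by
                apply pow_le_pow_right₀ (by norm_num) (Nat.le_succ n)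
      _ = ‖qs n‖ * rr ^ n * rr := by ring
  have hsummand : ∀ q : ℝ, R < q → Summable (fun n : ℕ => qs.coeff n * q ^ (-(n:ℤ))) := by
    intro q hq
    refine Summable.of_norm_bounded hsumb fun n => ?_
    rw [Real.norm_eq_abs, abs_mul, hcb, hzp, abs_pow]
    apply mul_le_mul_of_nonneg_left _ (norm_nonneg _)
    exact pow_le_pow_left₀ (abs_nonneg _) (hfull q hq).le n
  have hder : ∀ q : ℝ, R < q →
      HasDerivAt (fun z : ℝ => ∑' n : ℕ, qs.coeff n * z ^ (-(n:ℤ)))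
        (∑' n : ℕ, qs.coeff n * (((-(n:ℤ) : ℤ) : ℝ) * q ^ (-(n:ℤ)-1))) q := by
    intro q hq
    refine hasDerivAt_tsum_of_isPreconnected ((hsumb.mul_right rr)) isOpen_Ioi
      isPreconnected_Ioi (fun n y hy => ?_) hdbound hq ?_ hq
    · have hy0 : (0:ℝ) < y := hqpos y hy
      exact (hasDerivAt_zpow (-(n:ℤ)) y (Or.inl (ne_of_gt hy0))).const_mul (qs.coeff n)
    · exact hsummand q hq
  -- the summable derivative series
  have hdsum : ∀ q : ℝ, R < q →
      Summable (fun n : ℕ => qs.coeff n * (((-(n:ℤ) : ℤ) : ℝ) * q ^ (-(n:ℤ)-1))) := by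
    intro q hq
    exact Summable.of_norm_bounded ((hsumb.mul_right rr)) fun n => hdbound n q hq
  refine ⟨R, hRpos, (fun n => pq.coeff n), (fun n => qs.coeff n), ?_, ?_, ?_, ?_, ?_, ?_⟩
  · -- p 0 = exp (s * c)
    show pq.coeff 0 = Real.exp (s * c)
    have h2 : pq.coeff 0 = Real.exp (s * g 0) := by
      simpa using hball2.coeff_zero 1
    rw [h2, hg0]
  · -- b 0 = c
    show qs.coeff 0 = c
    have h2 : qs.coeff 0 = g 0 := by
      simpa using hball.coeff_zero 1
    rw [h2, hg0]
  · -- summability of p over ℂ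
    intro q hq
    have h0 : (0:ℝ) < ‖q‖ := lt_trans hRpos hq
    refine Summable.of_nonneg_of_le (fun n => norm_nonneg _) (fun n => ?_) hsump
    rw [norm_mul, norm_zpow, Complex.norm_real, Real.norm_eq_abs, hcp, hzp]
    apply mul_le_mul_of_nonneg_left _ (norm_nonneg _)
    calc (1/‖q‖)^n ≤ |1/‖q‖|^n := by
          rw [abs_of_pos (by positivity)]
      _ ≤ rr1^n := pow_le_pow_left₀ (abs_nonneg _) (hfull1 ‖q‖ hq).le n
  · -- exp identity
    intro q hq
    rw [hkey q hq, ← (hsp (1/q) (hfull1 q hq)).tsum_eq]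
    exact tsum_congr fun n => by rw [hzp, mul_comm]
  · -- b identity and derivative
    intro q hq
    refine ⟨hts q hq, ?_⟩
    have hD : HasDerivAt ξ (∑' n : ℕ, qs.coeff n * (((-(n:ℤ) : ℤ) : ℝ) * q ^ (-(n:ℤ)-1))) q := by
      refine (hder q hq).congr_of_eventuallyEq ?_
      filter_upwards [Ioi_mem_nhds hq] with y hy
      exact hts y hy
    convert hD using 1
    rw [Summable.tsum_eq_zero_add (hdsum q hq)]
    have h00 : qs.coeff 0 * (((-((0:ℕ):ℤ) : ℤ) : ℝ) * q ^ (-((0:ℕ):ℤ)-1)) = 0 := by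
      norm_num
    rw [h00, zero_add]
    exact (tsum_congr fun n => by
      push_cast
      have he : q ^ (-((n:ℤ)+1)-1) = q ^ (-(n:ℤ)-2) := by
        congr 1
        ring
      rw [he]
      ring).symm
  · -- summability of derivative series over ℂ
    intro q hq
    have h0 : (0:ℝ) < ‖q‖ := lt_trans hRpos hq
    refine Summable.of_nonneg_of_le (fun n => norm_nonneg _)
      (fun n => ?_) (((hsumb.comp_injective Nat.succ_injective).mul_right rr))
    show ‖(((1 - ((n:ℝ)+2)) * qs.coeff (n+1) : ℝ) : ℂ) * q ^ (-(n:ℤ)-2)‖ ≤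
      ‖qs (n+1)‖ * rr ^ (n+1) * rr
    rw [norm_mul, norm_zpow, Complex.norm_real, Real.norm_eq_abs, abs_mul, hcb]
    have he : ‖q‖ ^ (-(n:ℤ)-2) = (1/‖q‖)^(n+2) := by
      rw [← hzp ‖q‖ (n+2)]
      congr 1
      push_cast
      ring
    rw [he]
    have h1 : |1 - ((n:ℝ)+2)| = (n:ℝ)+1 := by
      rw [abs_of_nonpos (by linarith)]
      ring
    rw [h1]
    have hq2 : (1/‖q‖)^(n+2) ≤ (rr/2)^(n+2) := by
      calc (1/‖q‖)^(n+2) = |1/‖q‖|^(n+2) := by rw [abs_of_pos (by positivity)]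
        _ ≤ (rr/2)^(n+2) := pow_le_pow_left₀ (abs_nonneg _) (hhalf ‖q‖ hq).le _
    have hx2 : ((n:ℝ)+1) ≤ 2^(n+2) := by
      have h3 := hn2 (n+1)
      push_cast at h3
      calc (n:ℝ)+1 ≤ 2^(n+1) := h3
        _ ≤ 2^(n+2) := pow_le_pow_right₀ (by norm_num) (Nat.le_succ _)
    calc ((n:ℝ)+1) * ‖qs (n+1)‖ * (1/‖q‖)^(n+2)
        ≤ ((n:ℝ)+1) * ‖qs (n+1)‖ * (rr/2)^(n+2) := by
          apply mul_le_mul_of_nonneg_left hq2 (by positivity)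
      _ = ‖qs (n+1)‖ * (((n:ℝ)+1) * (rr/2)^(n+2)) := by ring
      _ ≤ ‖qs (n+1)‖ * rr^(n+2) :=
          mul_le_mul_of_nonneg_left (hpow2 _ _ (by positivity) hx2) (norm_nonneg _)
      _ = ‖qs (n+1)‖ * rr^(n+1) * rr := by ring

lemma interval_case (σ A : ℝ) (N Nh : ℕ) (aa ρ ah ρh : ℕ → ℝ)
    (hpos : ∀ m ∈ Finset.Icc 1 N, 0 < aa m)
    (hposh : ∀ m ∈ Finset.Icc 1 Nh, 0 < ah m)
    (hρ0 : ρ 0 = 0) (hρh0 : ρh 0 = 0)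
    (hmono : ∀ i j, i < j → j ≤ N → ρ i < ρ j)
    (hmonoh : ∀ i j, i < j → j ≤ Nh → ρh i < ρh j)
    (ℓ : ℕ) (hℓ : ℓ ∈ Finset.Icc 1 N) (ξ : ℝ → ℝ) (s : ℝ)
    (hξ : ∀ q : ℝ, 0 < q → ξ q ∈ Set.Ioo (ρ (ℓ-1)) (ρ ℓ) ∧
      psiR σ A N Nh aa ρ ah ρh (ξ q) = q) :
    ∃ R > (0:ℝ), ∃ p b : ℕ → ℝ, p 0 = Real.exp (s * ρ ℓ) ∧ b 0 = ρ ℓ ∧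
      (∀ q : ℂ, R < ‖q‖ → Summable fun n : ℕ => ‖(p n : ℂ) * q ^ (-(n:ℤ))‖) ∧
      (∀ q : ℝ, R < q → Real.exp (s * ξ q) = ∑' n : ℕ, p n * q ^ (-(n:ℤ))) ∧
      (∀ q : ℝ, R < q → ξ q = ∑' n : ℕ, b n * q ^ (-(n:ℤ)) ∧
        HasDerivAt ξ (∑' n : ℕ, (1 - ((n:ℝ)+2)) * b (n+1) * q ^ (-(n:ℤ)-2)) q) ∧
      (∀ q : ℂ, R < ‖q‖ → Summable fun n : ℕ =>
        ‖(((1 - ((n:ℝ)+2)) * b (n+1) : ℝ) : ℂ) * q ^ (-(n:ℤ)-2)‖) := by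
  obtain ⟨hℓ1, hℓN⟩ := Finset.mem_Icc.mp hℓ
  set c : ℝ := ρ ℓ with hc
  have hcpos : 0 < c := by
    rw [hc, ← hρ0]
    exact hmono 0 ℓ (by omega) hℓN
  have hlo : 0 ≤ ρ (ℓ-1) := by
    rcases Nat.eq_zero_or_pos (ℓ-1) with h0 | h0
    · rw [h0, hρ0]
    · exact le_of_lt (hρ0 ▸ hmono 0 (ℓ-1) h0 (by omega))
  have hρh : ∀ m ∈ Finset.Icc 1 Nh, 0 < ρh m := by
    intro m hm
    obtain ⟨hm1, hm2⟩ := Finset.mem_Icc.mp hm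
    rw [← hρh0]
    exact hmonoh 0 m (by omega) hm2
  have hρne : ∀ m ∈ (Finset.Icc 1 N).erase ℓ, ρ m - c ≠ 0 := by
    intro m hm
    obtain ⟨hne, hmem⟩ := Finset.mem_erase.mp hm
    obtain ⟨hm1, hm2⟩ := Finset.mem_Icc.mp hmem
    rcases lt_or_gt_of_ne hne with h | h
    · exact ne_of_lt (by linarith [hmono m ℓ h hℓN])
    · exact ne_of_gt (by linarith [hmono ℓ m h hm2])
  set T : ℝ → ℝ := fun x => σ^2 * x^2 / 2 + A * x
      + x * ∑ m ∈ (Finset.Icc 1 N).erase ℓ, aa m / (ρ m - x)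
      - x * ∑ m ∈ Finset.Icc 1 Nh, ah m / (ρh m + x) with hT
  set Φ : ℝ → ℝ := fun x => (c - x) * T x + x * aa ℓ with hΦdef
  have hTa : AnalyticAt ℝ T c := by
    apply AnalyticAt.sub
    · apply AnalyticAt.add
      · apply AnalyticAt.add
        · exact (analyticAt_const.mul ((analyticAt_id.pow 2))).div analyticAt_const two_ne_zero
        · exact analyticAt_const.mul analyticAt_id
      · refine analyticAt_id.mul (Finset.analyticAt_fun_sum _ fun m hm => ?_)
        exact analyticAt_const.div (analyticAt_const.sub analyticAt_id) (hρne m hm)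
    · refine analyticAt_id.mul (Finset.analyticAt_fun_sum _ fun m hm => ?_)
      refine analyticAt_const.div (analyticAt_const.add analyticAt_id) ?_
      have := hρh m hm
      positivity
  have hΦa : AnalyticAt ℝ Φ c :=
    ((analyticAt_const.sub analyticAt_id).mul hTa).add (analyticAt_id.mul analyticAt_const)
  have hΦc : Φ c ≠ 0 := by
    have : Φ c = c * aa ℓ := by
      rw [hΦdef]
      simp
    rw [this]
    exact ne_of_gt (mul_pos hcpos (hpos ℓ hℓ))
  have hsplit : ∀ x : ℝ, ∑ m ∈ Finset.Icc 1 N, aa m / (ρ m - x)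
      = aa ℓ / (ρ ℓ - x) + ∑ m ∈ (Finset.Icc 1 N).erase ℓ, aa m / (ρ m - x) :=
    fun x => (Finset.add_sum_erase _ _ hℓ).symm
  have key : ∀ x : ℝ, x < c → psiR σ A N Nh aa ρ ah ρh x = T x + x * (aa ℓ / (c - x)) := by
    intro x hx2
    rw [psiR, hT]
    dsimp only
    rw [hsplit x]
    ring
  have hval : ∀ q : ℝ, 0 < q → Φ (ξ q) = (c - ξ q) * q := by
    intro q hq
    obtain ⟨⟨hx1, hx2⟩, hpsi⟩ := hξ q hq
    have hcx : c - ξ q ≠ 0 := ne_of_gt (sub_pos.mpr hx2)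
    have h5 : (c - ξ q) * (ξ q * (aa ℓ / (c - ξ q))) = ξ q * aa ℓ := by
      field_simp
    calc Φ (ξ q) = (c - ξ q) * psiR σ A N Nh aa ρ ah ρh (ξ q) := by
          rw [key (ξ q) hx2, hΦdef]
          dsimp only
          rw [mul_add, h5]
      _ = (c - ξ q) * q := by rw [hpsi]
  have hlt : ∀ q : ℝ, 0 < q → ξ q < c := fun q hq => (hξ q hq).1.2
  have hx : ∀ ε : ℝ, 0 < ε → ∃ M : ℝ, ∀ q : ℝ, M < q → c - ε < ξ q := by
    intro ε hε
    refine ⟨max (σ^2*c^2/2 + (abs A)*c + (∑ m ∈ Finset.Icc 1 N, aa m) * (c/ε)) 0, fun q hq => ?_⟩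
    have hq0 : 0 < q := lt_of_le_of_lt (le_max_right _ _) hq
    obtain ⟨⟨hx1, hx2⟩, hpsi⟩ := hξ q hq0
    by_contra hcon
    push_neg at hcon
    set x : ℝ := ξ q with hxx
    have hx0 : 0 < x := lt_of_le_of_lt hlo hx1
    have hxc : x < c := hx2
    have t1 : σ^2 * x^2 / 2 ≤ σ^2 * c^2 / 2 := by
      have hx2c : x^2 ≤ c^2 := by nlinarith
      have h6 : σ^2 * x^2 ≤ σ^2 * c^2 := mul_le_mul_of_nonneg_left hx2c (sq_nonneg σ)
      linarith
    have t2 : A * x ≤ |A| * c := by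
      calc A * x ≤ |A| * x := mul_le_mul_of_nonneg_right (le_abs_self A) hx0.le
        _ ≤ |A| * c := mul_le_mul_of_nonneg_left hxc.le (abs_nonneg A)
    have t3 : x * ∑ m ∈ Finset.Icc 1 N, aa m / (ρ m - x)
        ≤ (∑ m ∈ Finset.Icc 1 N, aa m) * (c/ε) := by
      rw [Finset.mul_sum, Finset.sum_mul]
      refine Finset.sum_le_sum fun m hm => ?_
      obtain ⟨hm1, hm2⟩ := Finset.mem_Icc.mp hm
      rcases lt_or_ge m ℓ with hml | hml
      · -- ρ m ≤ ρ (ℓ-1) < x, so the term is nonpositive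
        have hρmx : ρ m - x < 0 := by
          have : ρ m ≤ ρ (ℓ-1) := by
            rcases eq_or_lt_of_le ((by omega : m ≤ ℓ-1)) with he | hlt'
            · exact le_of_eq (by rw [he])
            · exact (hmono m (ℓ-1) hlt' (by omega)).le
          linarith
        have hterm : x * (aa m / (ρ m - x)) ≤ 0 := by
          apply mul_nonpos_of_nonneg_of_nonpos hx0.le
          exact le_of_lt (div_neg_of_pos_of_neg (hpos m hm) hρmx)
        refine le_trans hterm ?_
        have h7 := hpos m hm
        positivity
      · -- ρ m ≥ c, so ρ m - x ≥ c - x ≥ ε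
        have hρmc : c ≤ ρ m := by
          rcases eq_or_lt_of_le hml with he | h
          · exact le_of_eq (by rw [hc, he])
          · exact (hmono ℓ m h hm2).le
        have hεle : ε ≤ ρ m - x := by
          have : c - x ≥ ε := by linarith [hcon]
          linarith
        have hd : aa m / (ρ m - x) ≤ aa m / ε :=
          div_le_div_of_nonneg_left (hpos m hm).le hε hεle
        calc x * (aa m / (ρ m - x)) ≤ c * (aa m / ε) := by
              apply mul_le_mul hxc.le hd (div_nonneg (hpos m hm).le (by linarith)) hcpos.le
          _ = aa m * (c / ε) := by ring
    have t4 : 0 ≤ x * ∑ m ∈ Finset.Icc 1 Nh, ah m / (ρh m + x) := by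
      apply mul_nonneg hx0.le
      apply Finset.sum_nonneg
      intro m hm
      have h1 := hρh m hm
      have h2 := hposh m hm
      positivity
    have hle : psiR σ A N Nh aa ρ ah ρh x
        ≤ σ^2*c^2/2 + |A| * c + (∑ m ∈ Finset.Icc 1 N, aa m) * (c/ε) := by
      rw [psiR]
      linarith
    rw [hpsi] at hle
    exact absurd hq (not_lt.mpr (le_max_of_le_left hle))
  exact aux_expansion c s Φ ξ hΦa hΦc hlt hval hx

/-- For each interior root and `k > 0`: expansion of `k^{-ζ_ℓ(q)}` in powers of `q^{-1}`
with leading coefficient `k^{-ρ_ℓ}`, the expansion `ζ_ℓ(q) = ∑_{n≥0} b_n q^{-n}` with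
`b_0 = ρ_ℓ`, differentiability of `ζ_ℓ` in `q`, and the termwise-differentiated series
`ζ_ℓ'(q) = ∑_{n≥2} (1-n) b_{n-1} q^{-n}`; analogously for the hatted roots, where
`k^{ζ̂_ℓ(q)} = ∑_{n≥0} p̂_n q^{-n}` with `p̂_0 = k^{ρ̂_ℓ}`, `-ζ̂_ℓ(q) = ∑_{n≥0} b̂_n q^{-n}`
with `b̂_0 = -ρ̂_ℓ`, and `-ζ̂_ℓ'(q) = ∑_{n≥2} (1-n) b̂_{n-1} q^{-n}`.  All series converge
absolutely for `|q| > R`. -/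
theorem exponential_interior_roots_series
    (σ A : ℝ) (N Nh : ℕ) (aa ρ ah ρh : ℕ → ℝ)
    (hσ : 0 ≤ σ)
    (hpos : ∀ ℓ ∈ Finset.Icc 1 N, 0 < aa ℓ)
    (hposh : ∀ ℓ ∈ Finset.Icc 1 Nh, 0 < ah ℓ)
    (hρ0 : ρ 0 = 0) (hρh0 : ρh 0 = 0)
    (hmono : ∀ i j, i < j → j ≤ N → ρ i < ρ j)
    (hmonoh : ∀ i j, i < j → j ≤ Nh → ρh i < ρh j)
    (k : ℝ) (hk : 0 < k)
    (ζ ζh : ℕ → ℝ → ℝ)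
    (hζ : ∀ ℓ ∈ Finset.Icc 1 N, ∀ q : ℝ, 0 < q →
        ζ ℓ q ∈ Set.Ioo (ρ (ℓ - 1)) (ρ ℓ) ∧
        psi σ A N Nh aa ρ ah ρh (ζ ℓ q : ℂ) = (q : ℂ))
    (hζh : ∀ ℓ ∈ Finset.Icc 1 Nh, ∀ q : ℝ, 0 < q →
        -(ζh ℓ q) ∈ Set.Ioo (-(ρh ℓ)) (-(ρh (ℓ - 1))) ∧
        psi σ A N Nh aa ρ ah ρh (-(ζh ℓ q : ℝ) : ℂ) = (q : ℂ)) :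
    (∀ ℓ ∈ Finset.Icc 1 N,
      ∃ R > (0 : ℝ), ∃ p b : ℕ → ℝ, p 0 = k ^ (-(ρ ℓ)) ∧ b 0 = ρ ℓ ∧
        -- (a)
        (∀ q : ℂ, R < ‖q‖ → Summable (fun n : ℕ => ‖(p n : ℂ) * q ^ (-(n : ℤ))‖)) ∧
        (∀ q : ℝ, R < q → k ^ (-(ζ ℓ q)) = ∑' n : ℕ, p n * q ^ (-(n : ℤ))) ∧
        -- (b)
        (∀ q : ℝ, R < q →
          ζ ℓ q = ∑' n : ℕ, b n * q ^ (-(n : ℤ)) ∧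
          HasDerivAt (ζ ℓ)
            (∑' n : ℕ, (1 - ((n : ℝ) + 2)) * b (n + 1) * q ^ (-(n : ℤ) - 2)) q) ∧
        (∀ q : ℂ, R < ‖q‖ →
          Summable (fun n : ℕ =>
            ‖(((1 - ((n : ℝ) + 2)) * b (n + 1) : ℝ) : ℂ) * q ^ (-(n : ℤ) - 2)‖))) ∧
    (∀ ℓ ∈ Finset.Icc 1 Nh,
      ∃ R > (0 : ℝ), ∃ ph bh : ℕ → ℝ, ph 0 = k ^ (ρh ℓ) ∧ bh 0 = -(ρh ℓ) ∧
        (∀ q : ℂ, R < ‖q‖ → Summable (fun n : ℕ => ‖(ph n : ℂ) * q ^ (-(n : ℤ))‖)) ∧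
        (∀ q : ℝ, R < q → k ^ (ζh ℓ q) = ∑' n : ℕ, ph n * q ^ (-(n : ℤ))) ∧
        (∀ q : ℝ, R < q →
          -(ζh ℓ q) = ∑' n : ℕ, bh n * q ^ (-(n : ℤ)) ∧
          HasDerivAt (ζh ℓ)
            (-∑' n : ℕ, (1 - ((n : ℝ) + 2)) * bh (n + 1) * q ^ (-(n : ℤ) - 2)) q) ∧
        (∀ q : ℂ, R < ‖q‖ →
          Summable (fun n : ℕ =>
            ‖(((1 - ((n : ℝ) + 2)) * bh (n + 1) : ℝ) : ℂ) * q ^ (-(n : ℤ) - 2)‖))) := by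
  constructor
  · intro ℓ hℓ
    obtain ⟨R, hR, p, b, hp0, hb0, h1, h2, h3, h4⟩ :=
      interval_case σ A N Nh aa ρ ah ρh hpos hposh hρ0 hρh0 hmono hmonoh ℓ hℓ (ζ ℓ)
        (-Real.log k) (fun q hq => ⟨(hζ ℓ hℓ q hq).1, by
          have h5 := (hζ ℓ hℓ q hq).2
          rw [psi_ofReal] at h5
          exact_mod_cast h5⟩)
    refine ⟨R, hR, p, b, ?_, hb0, h1, ?_, h3, h4⟩
    · rw [hp0, Real.rpow_def_of_pos hk]
      congr 1
      ring
    · intro q hq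
      rw [Real.rpow_def_of_pos hk,
        show Real.log k * -(ζ ℓ q) = -Real.log k * ζ ℓ q by ring]
      exact h2 q hq
  · intro ℓ hℓ
    have hmemIoo : ∀ q : ℝ, 0 < q → ζh ℓ q ∈ Set.Ioo (ρh (ℓ-1)) (ρh ℓ) := by
      intro q hq
      obtain ⟨⟨ha, hb⟩, -⟩ := hζh ℓ hℓ q hq
      exact ⟨by linarith, by linarith⟩
    obtain ⟨R, hR, p, b, hp0, hb0, h1, h2, h3, h4⟩ :=
      interval_case σ (-A) Nh N ah ρh aa ρ hposh hpos hρh0 hρ0 hmonoh hmono ℓ hℓ (ζh ℓ)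
        (Real.log k) (fun q hq => ⟨hmemIoo q hq, by
          have h5 := (hζh ℓ hℓ q hq).2
          rw [← Complex.ofReal_neg, psi_ofReal] at h5
          have h6 : psiR σ A N Nh aa ρ ah ρh (-(ζh ℓ q)) = q := by exact_mod_cast h5
          rw [psiR_neg] at h6
          exact h6⟩)
    refine ⟨R, hR, p, (fun n => -(b n)), ?_, ?_, h1, ?_, ?_, ?_⟩
    · rw [hp0, Real.rpow_def_of_pos hk]
    · show -(b 0) = -(ρh ℓ)
      rw [hb0]
    · intro q hq
      rw [Real.rpow_def_of_pos hk]
      exact h2 q hq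
    · intro q hq
      obtain ⟨he, hd⟩ := h3 q hq
      constructor
      · rw [he, ← tsum_neg]
        exact tsum_congr fun n => by ring
      · convert hd using 1
        rw [← tsum_neg]
        exact tsum_congr fun n => by ring
    · intro q hq
      refine (h4 q hq).congr fun n => ?_
      show _ = ‖(((1 - ((n:ℝ)+2)) * -(b (n+1)) : ℝ) : ℂ) * q ^ (-(n:ℤ)-2)‖
      rw [norm_mul, norm_mul]
      congr 1
      rw [Complex.norm_real, Complex.norm_real, Real.norm_eq_abs, Real.norm_eq_abs,
        show (1 - ((n:ℝ)+2)) * -(b (n+1)) = -((1 - ((n:ℝ)+2)) * b (n+1)) by ring, abs_neg]
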